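/- arXiv:1201.3723 — 4 statements merged into one kernel-verified Lean document; each statement's English description precedes it below -/
import Mathlib

section
/- Let N be a positive integer, β ∈ (0,1), x ∈ (0,1) with N·x an integer satisfying 0 ≤ N·x ≤ N−1, and let E_1, …, E_N be independent, identically distributed {0,1}-valued random variables with P(E_i = 1) = β. Then P(∑_{i=1}^N E_i > N·x) ≥ (β/(1−β)) · exp(−N·H(x)) · exp(−N·I(x‖β)), where H(x) := −x·ln x − (1−x)·ln(1−x) and I(x‖β) := x·ln(x/β) + (1−x)·ln((1−x)/(1−β)). -/
open MeasureTheory ProbabilityTheory Real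

/-!
The event contains the single configuration in which a fixed set of `k + 1 = N x + 1`
coordinates equals `1` and all others equal `0`; by independence it has probability
`β ^ (k + 1) * (1 - β) ^ (N - k - 1)`. This is exactly the bound, because `H(x) + I(x‖β)` is the
cross entropy `-(x log β + (1 - x) log (1 - β))`, so
`exp (-N (H(x) + I(x‖β))) = β ^ k (1 - β) ^ (N - k)`.
-/

namespace Real

theorem mul_log_div {y : ℝ} (x : ℝ) (hy : y ≠ 0) : x * log (x / y) = x * log x - x * log y := by
  rcases eq_or_ne x 0 with rfl | hx
  · simp
  · rw [log_div hx hy, mul_sub]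

theorem binEntropy_add_klDiv_eq_crossEntropy (x : ℝ) {β : ℝ} (hβ₀ : β ≠ 0) (hβ₁ : 1 - β ≠ 0) :
    (-(x * log x) - (1 - x) * log (1 - x)) +
        (x * log (x / β) + (1 - x) * log ((1 - x) / (1 - β))) =
      -(x * log β + (1 - x) * log (1 - β)) := by
  rw [mul_log_div x hβ₀, mul_log_div (1 - x) hβ₁]
  ring

theorem exp_mul_crossEntropy_eq_pow_mul_pow {N k : ℕ} {x β : ℝ} (hβ : β ∈ Set.Ioo 0 1)
    (hkN : k ≤ N) (hNx : (N : ℝ) * x = k) :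
    exp (N * (x * log β + (1 - x) * log (1 - β))) = β ^ k * (1 - β) ^ (N - k) := by
  have h1β : 0 < 1 - β := sub_pos.2 hβ.2
  have hexp : (N : ℝ) * (x * log β + (1 - x) * log (1 - β)) =
      k * log β + ((N - k : ℕ) : ℝ) * log (1 - β) := by
    rw [Nat.cast_sub hkN, ← hNx]
    ring
  rw [hexp, exp_add, exp_nat_mul, exp_nat_mul, exp_log hβ.1, exp_log h1β]

theorem div_one_sub_mul_exp_binEntropy_mul_exp_klDiv {N k : ℕ} {x β : ℝ}
    (hβ : β ∈ Set.Ioo 0 1) (hkN : k < N) (hNx : (N : ℝ) * x = k) :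
    β / (1 - β) * exp (-N * (-(x * log x) - (1 - x) * log (1 - x))) *
        exp (-N * (x * log (x / β) + (1 - x) * log ((1 - x) / (1 - β)))) =
      β ^ (k + 1) * (1 - β) ^ (N - (k + 1)) := by
  have h1β : 1 - β ≠ 0 := (sub_pos.2 hβ.2).ne'
  rw [mul_assoc, ← exp_add, ← mul_add, binEntropy_add_klDiv_eq_crossEntropy x hβ.1.ne' h1β,
    neg_mul_neg, exp_mul_crossEntropy_eq_pow_mul_pow hβ hkN.le hNx,
    show N - k = N - (k + 1) + 1 by omega]
  field_simp
  ring

end Real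

section Bernoulli

variable {Ω ι : Type*} [MeasurableSpace Ω] {μ : Measure Ω} [IsProbabilityMeasure μ]
  {E : ι → Ω → ℝ} {β : ℝ}

theorem measure_setOf_eq_zero_of_bernoulli {i : ι} (hmeas : Measurable (E i))
    (h01 : ∀ ω, E i ω = 0 ∨ E i ω = 1) (hβ : 0 ≤ β)
    (hdist : μ {ω | E i ω = 1} = ENNReal.ofReal β) :
    μ {ω | E i ω = 0} = ENNReal.ofReal (1 - β) := by
  have hcompl : {ω | E i ω = 0} = {ω | E i ω = 1}ᶜ := by
    ext ω
    rcases h01 ω with h | h <;> simp [h]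
  rw [hcompl, prob_compl_eq_one_sub (s := {ω | E i ω = 1}) (hmeas (measurableSet_singleton 1)),
    hdist, ENNReal.ofReal_sub _ hβ, ENNReal.ofReal_one]

variable [Fintype ι] [DecidableEq ι]

theorem ProbabilityTheory.iIndepFun.measure_iInter_eq_ite_mem (hindep : iIndepFun E μ)
    (hmeas : ∀ i, Measurable (E i)) (h01 : ∀ i ω, E i ω = 0 ∨ E i ω = 1) (hβ : 0 ≤ β)
    (hdist : ∀ i, μ {ω | E i ω = 1} = ENNReal.ofReal β) (S : Finset ι) :
    μ (⋂ i, {ω | E i ω = if i ∈ S then 1 else 0}) =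
      ENNReal.ofReal β ^ S.card * ENNReal.ofReal (1 - β) ^ Sᶜ.card := by
  rw [hindep.meas_iInter (s := fun i => {ω | E i ω = if i ∈ S then 1 else 0})
    fun i => ⟨_, measurableSet_singleton _, rfl⟩]
  calc ∏ i, μ {ω | E i ω = if i ∈ S then 1 else 0}
      = ∏ i, if i ∈ S then ENNReal.ofReal β else ENNReal.ofReal (1 - β) := by
        refine Finset.prod_congr rfl fun i _ => ?_
        split_ifs
        exacts [hdist i, measure_setOf_eq_zero_of_bernoulli (hmeas i) (h01 i) hβ (hdist i)]
    _ = _ := by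
        rw [Finset.prod_ite]
        simp [Finset.filter_not, Finset.compl_eq_univ_sdiff]

omit [MeasurableSpace Ω] in
theorem sum_eq_card_of_eq_ite_mem {S : Finset ι} {ω : Ω}
    (hω : ∀ i, E i ω = if i ∈ S then 1 else 0) :
    ∑ i, E i ω = S.card := by
  simp [hω]

end Bernoulli

theorem stmt_2_general {Ω : Type*} [MeasurableSpace Ω] (μ : Measure Ω) [IsProbabilityMeasure μ]
    (N : ℕ) (hN : 0 < N) (β x : ℝ) (hβ : β ∈ Set.Ioo (0 : ℝ) 1)
    (hint : ∃ k : ℕ, (N : ℝ) * x = (k : ℝ) ∧ k ≤ N - 1)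
    (E : Fin N → Ω → ℝ)
    (hmeas : ∀ i, Measurable (E i))
    (h01 : ∀ i ω, E i ω = 0 ∨ E i ω = 1)
    (hdist : ∀ i, μ {ω | E i ω = 1} = ENNReal.ofReal β)
    (hindep : iIndepFun E μ) :
    ENNReal.ofReal ((β / (1 - β)) *
        Real.exp (-(N : ℝ) * (-(x * Real.log x) - (1 - x) * Real.log (1 - x))) *
        Real.exp (-(N : ℝ) *
          (x * Real.log (x / β) + (1 - x) * Real.log ((1 - x) / (1 - β))))) ≤
      μ {ω | (N : ℝ) * x < ∑ i, E i ω} := by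
  obtain ⟨k, hNx, hk⟩ := hint
  have hkN : k < N := by omega
  obtain ⟨S, -, hS⟩ := Finset.exists_subset_card_eq (s := (Finset.univ : Finset (Fin N)))
    (n := k + 1) (by simpa using hkN)
  calc ENNReal.ofReal _ = μ (⋂ i, {ω | E i ω = if i ∈ S then 1 else 0}) := by
        rw [hindep.measure_iInter_eq_ite_mem hmeas h01 hβ.1.le hdist,
          div_one_sub_mul_exp_binEntropy_mul_exp_klDiv hβ hkN hNx,
          ENNReal.ofReal_mul (by positivity [hβ.1]), ENNReal.ofReal_pow hβ.1.le,
          ENNReal.ofReal_pow (sub_nonneg.2 hβ.2.le), Finset.card_compl, Fintype.card_fin, hS]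
    _ ≤ μ {ω | (N : ℝ) * x < ∑ i, E i ω} := by
        refine measure_mono fun ω hω => ?_
        rw [Set.mem_iInter] at hω
        rw [Set.mem_ofPred_eq, sum_eq_card_of_eq_ite_mem hω, hS, hNx]
        push_cast
        linarith

/-- Lower bound on the probability that more than a fraction `x` of `N` iid Bernoulli(β)
symbol errors occur, in terms of the Bernoulli entropy `H(x)` and the Kullback–Leibler
divergence `I(x‖β)`. -/
theorem stmt_2 {Ω : Type*} [MeasurableSpace Ω] (μ : Measure Ω) [IsProbabilityMeasure μ]
    (N : ℕ) (hN : 0 < N) (β x : ℝ) (hβ : β ∈ Set.Ioo (0 : ℝ) 1) (hx : x ∈ Set.Ioo (0 : ℝ) 1)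
    (hint : ∃ k : ℕ, (N : ℝ) * x = (k : ℝ) ∧ k ≤ N - 1)
    (E : Fin N → Ω → ℝ)
    (hmeas : ∀ i, Measurable (E i))
    (h01 : ∀ i ω, E i ω = 0 ∨ E i ω = 1)
    (hdist : ∀ i, μ {ω | E i ω = 1} = ENNReal.ofReal β)
    (hindep : iIndepFun E μ) :
    ENNReal.ofReal ((β / (1 - β)) *
        Real.exp (-(N : ℝ) * (-(x * Real.log x) - (1 - x) * Real.log (1 - x))) *
        Real.exp (-(N : ℝ) *
          (x * Real.log (x / β) + (1 - x) * Real.log ((1 - x) / (1 - β))))) ≤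
      μ {ω | (N : ℝ) * x < ∑ i, E i ω} :=
  stmt_2_general μ N hN β x hβ hint E hmeas h01 hdist hindep
end

section
/- Let β ∈ (0, 1/2), and define on (β, 1/2) the functions θ*(x) := ln(x/β) − ln((1−x)/(1−β)), I(x) := x·ln(x/β) + (1−x)·ln((1−x)/(1−β)), and g(x) := x·(1−x)·θ*(x)² − I(x). Then g(x) > 0 for every x ∈ (β, 1/2). -/
open Real

/-!
With `β` fixed, `θ*` has derivative `1 / (x(1−x))` and `I` has derivative `θ*`, so
`g' = (1 − 2x)·θ*² + θ*`, which is positive on `(β, 1/2)` because `θ* > 0` there.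
Since `θ*(β) = I(β) = 0`, `g` vanishes at `β` and is therefore positive to its right.
-/

namespace BernoulliKL

/- The paper's `θ*(x)`, `I(x)` and `g(x)`, with `ln(a/b)` written as `ln a − ln b`
(see `gap_eq`). -/
noncomputable def chernoffParam (β x : ℝ) : ℝ :=
  log x - log (1 - x) - (log β - log (1 - β))

noncomputable def klDiv (β x : ℝ) : ℝ :=
  x * (log x - log β) + (1 - x) * (log (1 - x) - log (1 - β))

noncomputable def gap (β x : ℝ) : ℝ :=
  x * (1 - x) * chernoffParam β x ^ 2 - klDiv β x

variable {β x : ℝ}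

lemma hasDerivAt_log_one_sub (hx : x < 1) :
    HasDerivAt (fun y : ℝ => log (1 - y)) (-(1 - x)⁻¹) x := by
  simpa [neg_div, one_div] using ((hasDerivAt_id' x).const_sub 1).log (sub_pos.2 hx).ne'

lemma hasDerivAt_chernoffParam (hx0 : 0 < x) (hx1 : x < 1) :
    HasDerivAt (chernoffParam β) (x⁻¹ + (1 - x)⁻¹) x :=
  (((hasDerivAt_log hx0.ne').sub (hasDerivAt_log_one_sub hx1)).sub_const
    (log β - log (1 - β))).congr_deriv (by ring)

lemma hasDerivAt_klDiv (hx0 : 0 < x) (hx1 : x < 1) :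
    HasDerivAt (klDiv β) (chernoffParam β x) x := by
  have h := ((hasDerivAt_id' x).mul ((hasDerivAt_log hx0.ne').sub_const (log β))).add
    (((hasDerivAt_id' x).const_sub 1).mul ((hasDerivAt_log_one_sub hx1).sub_const (log (1 - β))))
  refine h.congr_deriv ?_
  have : (1 - x) ≠ 0 := (sub_pos.2 hx1).ne'
  unfold chernoffParam
  field_simp
  ring

lemma hasDerivAt_gap (hx0 : 0 < x) (hx1 : x < 1) :
    HasDerivAt (gap β) ((1 - 2 * x) * chernoffParam β x ^ 2 + chernoffParam β x) x := by
  have hθ := hasDerivAt_chernoffParam (β := β) hx0 hx1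
  have h := (((hasDerivAt_id' x).mul ((hasDerivAt_id' x).const_sub 1)).mul (hθ.pow 2)).sub
    (hasDerivAt_klDiv (β := β) hx0 hx1)
  refine h.congr_deriv ?_
  have : (1 - x) ≠ 0 := (sub_pos.2 hx1).ne'
  simp only [Pi.mul_apply, Pi.pow_apply]
  field_simp
  ring

lemma chernoffParam_pos (hβ : 0 < β) (hβx : β < x) (hx : x < 1) : 0 < chernoffParam β x := by
  have h₁ : log β < log x := log_lt_log hβ hβx
  have h₂ : log (1 - x) < log (1 - β) := log_lt_log (by linarith) (by linarith)
  unfold chernoffParam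
  linarith

lemma gap_self (β : ℝ) : gap β β = 0 := by
  simp [gap, chernoffParam, klDiv]

lemma strictMonoOn_gap (hβ : 0 < β) : StrictMonoOn (gap β) (Set.Icc β (1 / 2)) := by
  have hderiv : ∀ y ∈ Set.Icc β (1 / 2), HasDerivAt (gap β) _ y := fun y hy =>
    hasDerivAt_gap (hβ.trans_le hy.1) (by linarith [hy.2])
  refine strictMonoOn_of_deriv_pos (convex_Icc _ _)
    (fun y hy => (hderiv y hy).continuousAt.continuousWithinAt) fun y hy => ?_
  rw [interior_Icc] at hy
  rw [(hderiv y (Set.Ioo_subset_Icc_self hy)).deriv]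
  have hθ := chernoffParam_pos hβ hy.1 (by linarith [hy.2])
  have h2y : 0 < 1 - 2 * y := by linarith [hy.2]
  positivity

lemma gap_pos (hβ : 0 < β) (hβx : β < x) (hx : x ≤ 1 / 2) : 0 < gap β x := by
  rw [← gap_self β]
  exact strictMonoOn_gap hβ ⟨le_rfl, by linarith⟩ ⟨hβx.le, hx⟩ hβx

lemma gap_eq (hβ0 : 0 < β) (hβ1 : β < 1) (hx0 : 0 < x) (hx1 : x < 1) :
    gap β x = x * (1 - x) * (log (x / β) - log ((1 - x) / (1 - β))) ^ 2 -
      (x * log (x / β) + (1 - x) * log ((1 - x) / (1 - β))) := by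
  rw [log_div hx0.ne' hβ0.ne', log_div (by linarith) (by linarith), gap, chernoffParam, klDiv]
  ring

end BernoulliKL

/-- On `(β, 1/2)` the function `g(x) = x(1−x)·θ*(x)² − I(x‖β)` is positive, where
`θ*(x) = ln(x/β) − ln((1−x)/(1−β))` and `I(x‖β)` is the Bernoulli KL divergence. -/
theorem stmt_9 (β : ℝ) (hβ : β ∈ Set.Ioo (0 : ℝ) (1 / 2)) (x : ℝ)
    (hx : x ∈ Set.Ioo β (1 / 2)) :
    0 < x * (1 - x) * (Real.log (x / β) - Real.log ((1 - x) / (1 - β))) ^ 2 -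
        (x * Real.log (x / β) + (1 - x) * Real.log ((1 - x) / (1 - β))) := by
  rw [← BernoulliKL.gap_eq hβ.1 (by linarith [hβ.2]) (hβ.1.trans hx.1) (by linarith [hx.2])]
  exact BernoulliKL.gap_pos hβ.1 hx.1 hx.2.le
end

section
/- Let D > 0. The function (u, v) ↦ ln(1 − exp(−D·e^{u+v})) is jointly concave on ℝ². -/
/-!
With `φ t = log (1 - exp (-(D * exp t)))` the function in question is `φ (u + v)`, a concave
function precomposed with a linear map, so it suffices that `φ` is concave on `ℝ`. Its derivative
is `g (D * exp t)` with `g x = x / (exp x - 1)`, and `g` decreases on `(0, ∞)` because its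
reciprocal is the slope of the convex function `exp` between `0` and `x`.
-/

open Real Set

lemma antitoneOn_div_exp_sub_one : AntitoneOn (fun x : ℝ => x / (exp x - 1)) (Ioi 0) := by
  intro x (hx : 0 < x) y (hy : 0 < y) hxy
  have hslope : (exp x - 1) / x ≤ (exp y - 1) / y := by
    simpa only [exp_zero, sub_zero] using
      convexOn_exp.secant_mono (mem_univ 0) (mem_univ x) (mem_univ y) hx.ne' hy.ne' hxy
  have hpos : 0 < (exp x - 1) / x := div_pos (by linarith [add_one_lt_exp hx.ne']) hx
  simpa only [inv_div] using inv_anti₀ hpos hslope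

lemma hasDerivAt_log_one_sub_exp_neg_mul_exp {D : ℝ} (hD : 0 < D) (t : ℝ) :
    HasDerivAt (fun t => log (1 - exp (-(D * exp t))))
      (D * exp t / (exp (D * exp t) - 1)) t := by
  have hDt : 0 < D * exp t := by positivity
  have hlt : exp (-(D * exp t)) < 1 := exp_lt_one_iff.2 (neg_lt_zero.2 hDt)
  have hinner : HasDerivAt (fun t => -(D * exp t)) (-(D * exp t)) t :=
    ((hasDerivAt_exp t).const_mul D).neg
  convert (hinner.exp.const_sub 1).log (by linarith) using 1
  rw [exp_neg]
  field_simp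

lemma concaveOn_log_one_sub_exp_neg_mul_exp {D : ℝ} (hD : 0 < D) :
    ConcaveOn ℝ univ (fun t => log (1 - exp (-(D * exp t)))) := by
  have hderiv := hasDerivAt_log_one_sub_exp_neg_mul_exp hD
  refine Antitone.concaveOn_univ_of_deriv (fun t => (hderiv t).differentiableAt) ?_
  intro s t hst
  rw [(hderiv s).deriv, (hderiv t).deriv]
  exact antitoneOn_div_exp_sub_one (by positivity : 0 < D * exp s) (by positivity : 0 < D * exp t)
    (by gcongr)

/-- For `D > 0`, the function `(u, v) ↦ ln(1 − exp(−D·e^{u+v}))` is jointly concave on `ℝ²`. -/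
theorem stmt_12 (D : ℝ) (hD : 0 < D) :
    ConcaveOn ℝ Set.univ
      (fun p : ℝ × ℝ => Real.log (1 - Real.exp (-(D * Real.exp (p.1 + p.2))))) :=
  (concaveOn_log_one_sub_exp_neg_mul_exp hD).comp_linearMap
    (LinearMap.fst ℝ ℝ ℝ + LinearMap.snd ℝ ℝ ℝ)
end

section
/- Let β ∈ (0, 1/2) and let I : (β, 1/2) → ℝ be given by I(x) := x·ln(x/β) + (1−x)·ln((1−x)/(1−β)). Then I is a strictly increasing continuous bijection from (β, 1/2) onto (0, I(1/2)), and the function Ĩ ↦ I⁻¹(e^{Ĩ}) is convex on the interval (−∞, ln I(1/2)). -/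
open Real Set

/-!
`I` has derivative `L(x) = log (x/β) - log ((1-x)/(1-β))`, which is positive on `(β, 1)`, so `I`
is strictly increasing and its image is given by the intermediate value theorem. The inverse of
a strictly increasing concave function is convex, so it remains to see that `log ∘ I` is concave
on `(β, 1/2)`. Since `L' = 1 / (x(1-x))`, its second derivative has the sign of
`I - x(1-x) L²`, and `F = x(1-x) L² - I` vanishes at `β` with `F' = (1-2x) L² + L ≥ 0`
on `[β, 1/2]`.
-/

theorem ConcaveOn.convexOn_of_leftInvOn {𝕜 E F : Type*} [Semiring 𝕜] [PartialOrder 𝕜]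
    [AddCommMonoid E] [LinearOrder E] [SMul 𝕜 E] [AddCommMonoid F] [PartialOrder F] [SMul 𝕜 F]
    {s : Set E} {t : Set F} {f : F → E} {g : E → F}
    (hg : ConcaveOn 𝕜 s g) (hg_mono : StrictMonoOn g s) (ht : Convex 𝕜 t)
    (hf : MapsTo f t s) (hgf : LeftInvOn g f t) : ConvexOn 𝕜 t f := by
  refine ⟨ht, fun a ha b hb μ ν hμ hν hμν => ?_⟩
  have hc := ht ha hb hμ hν hμν
  refine (hg_mono.le_iff_le (hf hc) (hg.1 (hf ha) (hf hb) hμ hν hμν)).1 ?_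
  calc g (f (μ • a + ν • b)) = μ • g (f a) + ν • g (f b) := by rw [hgf hc, hgf ha, hgf hb]
    _ ≤ g (μ • f a + ν • f b) := hg.2 (hf ha) (hf hb) hμ hν hμν

theorem continuous_mul_log_div_const (c : ℝ) : Continuous fun x => x * log (x / c) := by
  rcases eq_or_ne c 0 with rfl | hc
  · simpa using continuous_const
  · have : (fun x => x * log (x / c)) = fun x => x * log x - x * log c := by
      funext x
      rcases eq_or_ne x 0 with rfl | hx
      · simp
      · rw [log_div hx hc, mul_sub]
    rw [this]
    exact continuous_mul_log.sub (continuous_mul_const _)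

theorem hasDerivAt_log_div_const {c x : ℝ} (hc : c ≠ 0) (hx : x ≠ 0) :
    HasDerivAt (fun y => log (y / c)) x⁻¹ x :=
  (((hasDerivAt_id' x).div_const c).log (div_ne_zero hx hc)).congr_deriv (by field_simp)

theorem hasDerivAt_log_one_sub_div_const {c x : ℝ} (hc : c ≠ 1) (hx : x ≠ 1) :
    HasDerivAt (fun y => log ((1 - y) / (1 - c))) (-(1 - x)⁻¹) x :=
  ((hasDerivAt_log_div_const (sub_ne_zero.2 hc.symm) (sub_ne_zero.2 hx.symm)).comp x
    ((hasDerivAt_id' x).const_sub 1)).congr_deriv (mul_neg_one _)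

noncomputable def bernoulliKL (β x : ℝ) : ℝ :=
  x * log (x / β) + (1 - x) * log ((1 - x) / (1 - β))

noncomputable def bernoulliKLDeriv (β x : ℝ) : ℝ :=
  log (x / β) - log ((1 - x) / (1 - β))

section BernoulliKL

variable {β x : ℝ}

@[simp]
theorem bernoulliKL_self (β : ℝ) : bernoulliKL β β = 0 := by
  simp [bernoulliKL]

@[simp]
theorem bernoulliKLDeriv_self (β : ℝ) : bernoulliKLDeriv β β = 0 := by
  simp [bernoulliKLDeriv]

theorem continuous_bernoulliKL (β : ℝ) : Continuous (bernoulliKL β) :=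
  (continuous_mul_log_div_const β).add
    ((continuous_mul_log_div_const (1 - β)).comp (continuous_const.sub continuous_id))

theorem hasDerivAt_bernoulliKL (hβ0 : β ≠ 0) (hβ1 : β ≠ 1) (hx0 : x ≠ 0) (hx1 : x ≠ 1) :
    HasDerivAt (bernoulliKL β) (bernoulliKLDeriv β x) x := by
  have h₁ := (hasDerivAt_id' x).mul (hasDerivAt_log_div_const hβ0 hx0)
  have h₂ := ((hasDerivAt_id' x).const_sub 1).mul (hasDerivAt_log_one_sub_div_const hβ1 hx1)
  refine (h₁.add h₂).congr_deriv ?_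
  field_simp
  simp only [bernoulliKLDeriv]
  ring

theorem hasDerivAt_bernoulliKLDeriv (hβ0 : β ≠ 0) (hβ1 : β ≠ 1) (hx0 : x ≠ 0) (hx1 : x ≠ 1) :
    HasDerivAt (bernoulliKLDeriv β) (x * (1 - x))⁻¹ x := by
  refine ((hasDerivAt_log_div_const hβ0 hx0).sub
    (hasDerivAt_log_one_sub_div_const hβ1 hx1)).congr_deriv ?_
  field_simp
  ring

theorem bernoulliKLDeriv_pos (hβ0 : 0 < β) (hβx : β < x) (hx1 : x < 1) :
    0 < bernoulliKLDeriv β x := by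
  have h₁ : 0 < log (x / β) := log_pos ((one_lt_div hβ0).2 hβx)
  have h₂ : log ((1 - x) / (1 - β)) < 0 :=
    log_neg (div_pos (by linarith) (by linarith)) ((div_lt_one (by linarith)).2 (by linarith))
  rw [bernoulliKLDeriv]
  linarith

theorem strictMonoOn_bernoulliKL (hβ0 : 0 < β) : StrictMonoOn (bernoulliKL β) (Icc β 1) := by
  refine strictMonoOn_of_deriv_pos (convex_Icc β 1) (continuous_bernoulliKL β).continuousOn ?_
  rw [interior_Icc]
  rintro x ⟨hβx, hx1⟩
  rw [(hasDerivAt_bernoulliKL hβ0.ne' (by linarith) (by linarith) hx1.ne).deriv]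
  exact bernoulliKLDeriv_pos hβ0 hβx hx1

theorem bernoulliKL_pos (hβ0 : 0 < β) (hβx : β < x) (hx1 : x ≤ 1) : 0 < bernoulliKL β x := by
  simpa using
    strictMonoOn_bernoulliKL hβ0 (left_mem_Icc.2 (hβx.trans_le hx1).le) ⟨hβx.le, hx1⟩ hβx

theorem bernoulliKL_le_mul_sq_bernoulliKLDeriv (hβ0 : 0 < β) (hβx : β ≤ x) (hx : x ≤ 1 / 2) :
    bernoulliKL β x ≤ x * (1 - x) * bernoulliKLDeriv β x ^ 2 := by
  set L := bernoulliKLDeriv β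
  set F : ℝ → ℝ := fun y => y * (1 - y) * L y ^ 2 - bernoulliKL β y
  have hF : ∀ y ∈ Icc β (1 / 2), HasDerivAt F ((1 - 2 * y) * L y ^ 2 + L y) y := by
    rintro y ⟨hβy, hy⟩
    have hy0 : y ≠ 0 := (hβ0.trans_le hβy).ne'
    have hy1 : 1 - y ≠ 0 := by linarith
    have hq := (hasDerivAt_id' y).fun_mul ((hasDerivAt_id' y).const_sub 1)
    have hL := hasDerivAt_bernoulliKLDeriv hβ0.ne' (by linarith) hy0 (by linarith)
    have hKL := hasDerivAt_bernoulliKL hβ0.ne' (by linarith) hy0 (by linarith)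
    refine ((hq.fun_mul (hL.fun_pow 2)).sub hKL).congr_deriv ?_
    field_simp
    ring
  have hF_mono : MonotoneOn F (Icc β (1 / 2)) := by
    refine monotoneOn_of_deriv_nonneg (convex_Icc _ _)
      (fun y hy => (hF y hy).continuousAt.continuousWithinAt)
      (fun y hy => (hF y (interior_subset hy)).differentiableAt.differentiableWithinAt) ?_
    rw [interior_Icc]
    intro y hy
    rw [(hF y (Ioo_subset_Icc_self hy)).deriv]
    have := bernoulliKLDeriv_pos hβ0 hy.1 (by linarith [hy.2])
    have : 0 ≤ 1 - 2 * y := by linarith [hy.2]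
    positivity
  simpa [F, L] using hF_mono (left_mem_Icc.2 (hβx.trans hx)) ⟨hβx, hx⟩ hβx

theorem concaveOn_log_bernoulliKL (hβ0 : 0 < β) :
    ConcaveOn ℝ (Ioo β (1 / 2)) (fun x => log (bernoulliKL β x)) := by
  set L := bernoulliKLDeriv β
  have hKL_pos : ∀ x ∈ Ioo β (1 / 2), 0 < bernoulliKL β x := fun x hx =>
    bernoulliKL_pos hβ0 hx.1 (by linarith [hx.2])
  have hKL : ∀ x ∈ Ioo β (1 / 2), HasDerivAt (bernoulliKL β) (L x) x := fun x hx =>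
    hasDerivAt_bernoulliKL hβ0.ne' (by linarith [hx.1, hx.2]) (hβ0.trans hx.1).ne'
      (by linarith [hx.2])
  have hL : ∀ x ∈ Ioo β (1 / 2), HasDerivAt L (x * (1 - x))⁻¹ x := fun x hx =>
    hasDerivAt_bernoulliKLDeriv hβ0.ne' (by linarith [hx.1, hx.2]) (hβ0.trans hx.1).ne'
      (by linarith [hx.2])
  refine concaveOn_of_hasDerivWithinAt2_nonpos (convex_Ioo _ _)
    ((continuous_bernoulliKL β).continuousOn.log fun x hx => (hKL_pos x hx).ne')
    (f' := fun x => L x / bernoulliKL β x)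
    (f'' := fun x => ((x * (1 - x))⁻¹ * bernoulliKL β x - L x * L x) / bernoulliKL β x ^ 2)
    ?_ ?_ ?_ <;> rw [interior_Ioo] <;> intro x hx
  · exact ((hKL x hx).log (hKL_pos x hx).ne').hasDerivWithinAt
  · exact ((hL x hx).div (hKL x hx) (hKL_pos x hx).ne').hasDerivWithinAt
  · have hx_pos : 0 < x * (1 - x) := mul_pos (hβ0.trans hx.1) (by linarith [hx.2])
    have := bernoulliKL_le_mul_sq_bernoulliKLDeriv hβ0 hx.1.le hx.2.le
    refine div_nonpos_of_nonpos_of_nonneg (sub_nonpos.2 ((inv_mul_le_iff₀ hx_pos).2 ?_))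
      (sq_nonneg _)
    linarith

end BernoulliKL

/-- For `β ∈ (0,1/2)`, the KL divergence `I(x) = x·ln(x/β) + (1−x)·ln((1−x)/(1−β))` is a
strictly increasing continuous bijection from `(β, 1/2)` onto `(0, I(1/2))`, and any
inverse map `Ĩ ↦ I⁻¹(e^Ĩ)` is convex on `(−∞, ln I(1/2))`. -/
theorem stmt_13 (β : ℝ) (hβ : β ∈ Set.Ioo (0 : ℝ) (1 / 2))
    (I : ℝ → ℝ)
    (hI : ∀ x, I x = x * Real.log (x / β) + (1 - x) * Real.log ((1 - x) / (1 - β))) :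
    StrictMonoOn I (Set.Ioo β (1 / 2)) ∧
    ContinuousOn I (Set.Ioo β (1 / 2)) ∧
    I '' Set.Ioo β (1 / 2) = Set.Ioo 0 (I (1 / 2)) ∧
    ∀ xinv : ℝ → ℝ,
      (∀ It ∈ Set.Iio (Real.log (I (1 / 2))),
        xinv It ∈ Set.Ioo β (1 / 2) ∧ I (xinv It) = Real.exp It) →
      ConvexOn ℝ (Set.Iio (Real.log (I (1 / 2)))) xinv := by
  obtain ⟨hβ0, hβ_half⟩ := hβ
  obtain rfl : I = bernoulliKL β := funext hI
  have hmono : StrictMonoOn (bernoulliKL β) (Icc β (1 / 2)) :=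
    (strictMonoOn_bernoulliKL hβ0).mono (Icc_subset_Icc_right (by norm_num))
  refine ⟨hmono.mono Ioo_subset_Icc_self, (continuous_bernoulliKL β).continuousOn, ?_,
    fun xinv hxinv => ?_⟩
  · simpa using (continuous_bernoulliKL β).continuousOn.image_Ioo_of_strictMonoOn
      hβ_half.le hmono
  · have hlog_mono : StrictMonoOn (fun x => log (bernoulliKL β x)) (Ioo β (1 / 2)) :=
      fun x hx y hy hxy => log_lt_log (bernoulliKL_pos hβ0 hx.1 (by linarith [hx.2]))
        (hmono.mono Ioo_subset_Icc_self hx hy hxy)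
    exact (concaveOn_log_bernoulliKL hβ0).convexOn_of_leftInvOn hlog_mono (convex_Iio _)
      (fun y hy => (hxinv y hy).1) fun y hy => by simp only [(hxinv y hy).2, log_exp]
end
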